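/- arXiv:1803.09262 — 6 statements merged into one kernel-verified Lean document; each statement's English description precedes it below -/
import Mathlib

section
/- (Big-cell Bruhat decomposition of an upper unipotent element.) Let x, y ∈ E with y ≠ 0 and x·x̄ + y + ȳ = 0. Then n(x, y) = n'(−x̄·y⁻¹, y⁻¹) · h(y) · β · n'(−x̄·(ȳ)⁻¹, y⁻¹). -/
/-!
Multiplying out, `n'(a, b) · diag(t₁, t₂, t₃) · β · n'(c, d)` has an explicit closed form in the
nine parameters. For the parameters of the theorem all entries but two agree with those of
`n(x, y)` after clearing the denominators `y` and `ȳ`; the centre entry and the bottom-left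
entry agree precisely because `x·x̄ + y + ȳ = 0`.
-/

open Matrix

theorem lower_mul_diagonal_mul_antidiagonal_mul_lower {R : Type*} [Semiring R]
    (a b e c d f t₁ t₂ t₃ : R) :
    !![1, 0, 0; a, 1, 0; b, e, 1] * diagonal ![t₁, t₂, t₃] * !![0, 0, 1; 0, 1, 0; 1, 0, 0] *
        !![1, 0, 0; c, 1, 0; d, f, 1] =
      !![t₁ * d, t₁ * f, t₁;
        t₂ * c + a * t₁ * d, t₂ + a * t₁ * f, a * t₁;
        t₃ + e * t₂ * c + b * t₁ * d, e * t₂ + b * t₁ * f, b * t₁] := by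
  simp only [diagonal_vec3, mul_fin_three, mul_zero, zero_mul, mul_one, one_mul, add_zero,
    zero_add]

/-- Big-cell Bruhat decomposition of an upper unipotent element: if `y ≠ 0` and
`x·σ(x) + y + σ(y) = 0`, then
`n(x, y) = n'(-σ(x)·y⁻¹, y⁻¹) · h(y) · β · n'(-σ(x)·σ(y)⁻¹, y⁻¹)`,
where `n(x,y) = [[1, x, y], [0, 1, -σ x], [0, 0, 1]]`,
`n'(x,y) = [[1, 0, 0], [x, 1, 0], [y, -σ x, 1]]`,
`h(t) = diag(t, -σ(t)·t⁻¹, σ(t)⁻¹)` and `β` is the antidiagonal matrix of 1's. -/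
theorem upper_unipotent_bruhat {E : Type*} [Field E] (σ : E ≃+* E)
    (hσ : ∀ a : E, σ (σ a) = a) (x y : E) (hy : y ≠ 0) (hxy : x * σ x + y + σ y = 0) :
    (!![1, x, y; 0, 1, -σ x; 0, 0, 1] : Matrix (Fin 3) (Fin 3) E) =
      !![1, 0, 0; -σ x * y⁻¹, 1, 0; y⁻¹, -σ (-σ x * y⁻¹), 1] *
        diagonal ![y, -σ y * y⁻¹, (σ y)⁻¹] *
        !![0, 0, 1; 0, 1, 0; 1, 0, 0] *
        !![1, 0, 0; -σ x * (σ y)⁻¹, 1, 0; y⁻¹, -σ (-σ x * (σ y)⁻¹), 1] := by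
  have hσy : σ y ≠ 0 := (map_ne_zero σ).mpr hy
  rw [lower_mul_diagonal_mul_antidiagonal_mul_lower]
  simp only [EmbeddingLike.apply_eq_iff_eq, vecCons_inj, and_true, map_mul, map_neg, map_inv₀, hσ]
  field_simp
  refine ⟨⟨trivial, trivial⟩, ⟨by ring, ?centre, trivial⟩, ?corner, by ring, trivial⟩
  case centre => linear_combination hxy
  case corner => linear_combination -hxy
end

section
/- Let x, y ∈ E with y ≠ 0 and x·x̄ + y + ȳ = 0, and let n ∈ ℤ. Then αⁿ · n(x, y) · β = n'(−ϖⁿ·x̄·y⁻¹, ϖ²ⁿ·y⁻¹) · αⁿ · h(y) · n(x·y⁻¹, y⁻¹). (This is the matrix identity underlying the computation of S_K f_{−n} in Proposition 4.2.) -/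
open Matrix

theorem diag3_eq {E : Type*} [Field E] (a b c : E) :
    (diagonal ![a, b, c] : Matrix (Fin 3) (Fin 3) E) = !![a,0,0;0,b,0;0,0,c] := by
  ext i j
  fin_cases i <;> fin_cases j <;> simp [diagonal, vecHead, vecTail]

theorem diag_zpow3 {E : Type*} [Field E] (a b c : E) (ha : a ≠ 0) (hb : b ≠ 0) (hc : c ≠ 0)
    (n : ℤ) : (diagonal ![a, b, c] : Matrix (Fin 3) (Fin 3) E) ^ n =
      !![a ^ n, 0, 0; 0, b ^ n, 0; 0, 0, c ^ n] := by
  have hv : ∀ i, (![a, b, c] : Fin 3 → E) i ≠ 0 := by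
    intro i; fin_cases i <;> assumption
  have hdet : IsUnit (diagonal ![a, b, c] : Matrix (Fin 3) (Fin 3) E).det := by
    rw [det_diagonal]
    exact (Finset.prod_ne_zero_iff.mpr fun i _ => hv i).isUnit
  have key : ∀ m : ℤ, (diagonal ![a, b, c] : Matrix (Fin 3) (Fin 3) E) ^ m =
      diagonal ![a ^ m, b ^ m, c ^ m] := by
    intro m
    obtain ⟨k, rfl | rfl⟩ := m.eq_nat_or_neg
    · have hp : (![a, b, c] : Fin 3 → E) ^ k = ![a ^ k, b ^ k, c ^ k] := by
        funext i; fin_cases i <;> simp [Pi.pow_apply]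
      rw [zpow_natCast, diagonal_pow, hp]
      norm_cast
    · have hp : (![a, b, c] : Fin 3 → E) ^ k = ![a ^ k, b ^ k, c ^ k] := by
        funext i; fin_cases i <;> simp [Pi.pow_apply]
      rw [Matrix.zpow_neg hdet, zpow_natCast, diagonal_pow, hp]
      refine Matrix.inv_eq_right_inv ?_
      rw [diagonal_mul_diagonal]
      convert diagonal_one using 2
      funext i
      fin_cases i <;>
        simp [_root_.zpow_neg, zpow_natCast] <;>
        [exact mul_inv_cancel₀ (pow_ne_zero k ha);
         exact mul_inv_cancel₀ (pow_ne_zero k hb);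
         exact mul_inv_cancel₀ (pow_ne_zero k hc)]
  rw [key, diag3_eq]


set_option maxHeartbeats 1000000 in
/-- Let `y ≠ 0` with `x·σ(x) + y + σ(y) = 0` and let `n ∈ ℤ`. Then
`αⁿ · n(x, y) · β = n'(-ϖⁿ·σ(x)·y⁻¹, ϖ²ⁿ·y⁻¹) · αⁿ · h(y) · n(x·y⁻¹, y⁻¹)`,
where `α = diag(ϖ⁻¹, 1, ϖ)` for a fixed nonzero `ϖ` with `σ ϖ = ϖ`,
`n(x,y) = [[1, x, y], [0, 1, -σ x], [0, 0, 1]]`,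
`n'(x,y) = [[1, 0, 0], [x, 1, 0], [y, -σ x, 1]]`,
`h(t) = diag(t, -σ(t)·t⁻¹, σ(t)⁻¹)` and `β` is the antidiagonal matrix of 1's.
(The matrix identity underlying the computation of `S_K f₋ₙ` in Proposition 4.2.) -/
theorem alpha_pow_upper_unipotent_beta {E : Type*} [Field E] (σ : E ≃+* E)
    (hσ : ∀ a : E, σ (σ a) = a) (ϖ : E) (hϖ : ϖ ≠ 0) (hϖσ : σ ϖ = ϖ)
    (x y : E) (hy : y ≠ 0) (hxy : x * σ x + y + σ y = 0) (n : ℤ) :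
    (diagonal ![ϖ⁻¹, 1, ϖ] : Matrix (Fin 3) (Fin 3) E) ^ n *
        !![1, x, y; 0, 1, -σ x; 0, 0, 1] * !![0, 0, 1; 0, 1, 0; 1, 0, 0] =
      !![1, 0, 0; -ϖ ^ n * σ x * y⁻¹, 1, 0;
          ϖ ^ (2 * n) * y⁻¹, -σ (-ϖ ^ n * σ x * y⁻¹), 1] *
        (diagonal ![ϖ⁻¹, 1, ϖ] : Matrix (Fin 3) (Fin 3) E) ^ n *
        diagonal ![y, -σ y * y⁻¹, (σ y)⁻¹] *
        !![1, x * y⁻¹, y⁻¹; 0, 1, -σ (x * y⁻¹); 0, 0, 1] := by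
  have hσy : σ y ≠ 0 := fun h => hy (by rw [← hσ y, h, map_zero])
  have hϖn : (ϖ : E) ^ n ≠ 0 := zpow_ne_zero n hϖ
  rw [diag_zpow3 _ _ _ (inv_ne_zero hϖ) one_ne_zero hϖ, diag3_eq,
    mul_fin_three, mul_fin_three, mul_fin_three, mul_fin_three, mul_fin_three]
  have hb2 : (ϖ : E) ^ (2 * n) = ϖ ^ n * ϖ ^ n := by rw [two_mul, zpow_add₀ hϖ]
  have hin : (ϖ⁻¹ : E) ^ n = (ϖ ^ n)⁻¹ := by rw [_root_.inv_zpow]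
  ext i j
  fin_cases i <;> fin_cases j <;>
    simp [hσ, hϖσ, map_zpow₀, _root_.map_mul, map_inv₀, map_neg, vecHead, vecTail, hin, hb2]
  all_goals field_simp
  all_goals first
    | ring1
    | linear_combination hxy
    | linear_combination (-1 : E) * hxy
    | linear_combination (ϖ ^ n) * hxy
    | linear_combination (-ϖ ^ n) * hxy
    | linear_combination (ϖ ^ n) * σ y * hxy
    | linear_combination (-(ϖ ^ n)) * σ y * hxy
    | linear_combination (ϖ ^ n * y) * hxy
    | linear_combination (-(ϖ ^ n) * y) * hxy
    | linear_combination (y ^ 2 * ϖ ^ n) * hxy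
    | (rw [eq_comm]; field_simp; linear_combination ((ϖ ^ n) ^ 2 * y ^ 2 * σ y) * hxy)
end

section
/- Let x, y ∈ E with y ≠ 0 and x·x̄ + y + ȳ = 0, and let n ∈ ℤ. Then α⁻ⁿ · n'(x, y) · α · β = n(−ϖⁿ·x̄·(ȳ)⁻¹, ϖ²ⁿ·y⁻¹) · h((ȳ)⁻¹) · α⁻⁽ⁿ⁺¹⁾ · n'(ϖ·x·(ȳ)⁻¹, ϖ²·y⁻¹). (This is the matrix identity underlying the computation of S_− f_n in Proposition 4.2.) -/
open Matrix

/-!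
Conjugation by `α ^ k` rescales the coordinates of the unipotent matrices,
`α⁻ᵏ n(u, v) αᵏ = n(ϖᵏ u, ϖ²ᵏ v)` and `α n'(u, v) α⁻¹ = n'(ϖ u, ϖ² v)` (this uses `ϖ̄ = ϖ`),
`h(t)` commutes with `α`, and `α β = β α⁻¹`. This moves all powers of `α` out of the way and
leaves the `ϖ`-free big-cell decomposition
`n'(x, y) β = n(-x̄ ȳ⁻¹, y⁻¹) h(ȳ⁻¹) n'(x ȳ⁻¹, y⁻¹)`,
a direct matrix computation in which `x x̄ + y + ȳ = 0` is used entrywise.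
-/

section

variable {E : Type*} [Field E] (σ : E ≃+* E)

def upperUnipotent (x y : E) : Matrix (Fin 3) (Fin 3) E :=
  !![1, x, y; 0, 1, -σ x; 0, 0, 1]

def lowerUnipotent (x y : E) : Matrix (Fin 3) (Fin 3) E :=
  !![1, 0, 0; x, 1, 0; y, -σ x, 1]

def torusElt (t : E) : Matrix (Fin 3) (Fin 3) E :=
  diagonal ![t, -σ t * t⁻¹, (σ t)⁻¹]

variable (E) in
def antidiagOne : Matrix (Fin 3) (Fin 3) E :=
  !![0, 0, 1; 0, 1, 0; 1, 0, 0]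

variable (E) in
@[simps]
def alphaHom : E →* Matrix (Fin 3) (Fin 3) E where
  toFun t := diagonal ![t⁻¹, 1, t]
  map_one' := by simp [diagonal_vec3, one_fin_three]
  map_mul' s t := by simp [diagonal_vec3, mul_comm]

lemma alphaHom_zpow {t : E} (ht : t ≠ 0) (k : ℤ) : alphaHom E t ^ k = alphaHom E (t ^ k) := by
  have := coe_units_zpow (Units.map (alphaHom E) (Units.mk0 t ht)) k
  rw [← map_zpow, Units.coe_map, Units.coe_map, Units.val_zpow_eq_zpow_val] at this
  simpa using this.symm

lemma alphaHom_mul_antidiagOne (t : E) :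
    alphaHom E t * antidiagOne E = antidiagOne E * alphaHom E t⁻¹ := by
  simp [alphaHom_apply, diagonal_vec3, antidiagOne]

lemma commute_alphaHom_torusElt (s t : E) : Commute (alphaHom E s) (torusElt σ t) :=
  commute_diagonal _ _

variable {σ}

lemma alphaHom_inv_mul_upperUnipotent {t : E} (ht : t ≠ 0) (hσt : σ t = t) (x y : E) :
    alphaHom E t⁻¹ * upperUnipotent σ x y =
      upperUnipotent σ (t * x) (t ^ 2 * y) * alphaHom E t⁻¹ := by
  simp [alphaHom_apply, diagonal_vec3, upperUnipotent, hσt, ht, sq, mul_right_comm _ _ t⁻¹]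

lemma lowerUnipotent_mul_alphaHom_inv {t : E} (ht : t ≠ 0) (hσt : σ t = t) (x y : E) :
    lowerUnipotent σ x y * alphaHom E t⁻¹ =
      alphaHom E t⁻¹ * lowerUnipotent σ (t * x) (t ^ 2 * y) := by
  simp [alphaHom_apply, diagonal_vec3, lowerUnipotent, hσt, ht, sq, mul_assoc, mul_comm _ t]

lemma lowerUnipotent_mul_antidiagOne (hσ : ∀ a : E, σ (σ a) = a) {x y : E} (hy : y ≠ 0)
    (hxy : x * σ x + y + σ y = 0) :
    lowerUnipotent σ x y * antidiagOne E =
      upperUnipotent σ (-σ x * (σ y)⁻¹) y⁻¹ * torusElt σ (σ y)⁻¹ *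
        lowerUnipotent σ (x * (σ y)⁻¹) y⁻¹ := by
  rw [upperUnipotent, lowerUnipotent, lowerUnipotent, torusElt, antidiagOne, diagonal_vec3,
    mul_fin_three, mul_fin_three, mul_fin_three]
  simp only [EmbeddingLike.apply_eq_iff_eq, vecCons_inj, and_true, hσ, map_neg, map_mul, map_inv₀]
  grind

end

/-- Let `y ≠ 0` with `x·σ(x) + y + σ(y) = 0` and let `n ∈ ℤ`. Then
`α⁻ⁿ · n'(x, y) · α · β
  = n(-ϖⁿ·σ(x)·σ(y)⁻¹, ϖ²ⁿ·y⁻¹) · h(σ(y)⁻¹) · α⁻⁽ⁿ⁺¹⁾ · n'(ϖ·x·σ(y)⁻¹, ϖ²·y⁻¹)`,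
where `α = diag(ϖ⁻¹, 1, ϖ)` for a fixed nonzero `ϖ` with `σ ϖ = ϖ`,
`n(x,y) = [[1, x, y], [0, 1, -σ x], [0, 0, 1]]`,
`n'(x,y) = [[1, 0, 0], [x, 1, 0], [y, -σ x, 1]]`,
`h(t) = diag(t, -σ(t)·t⁻¹, σ(t)⁻¹)` and `β` is the antidiagonal matrix of 1's.
(The matrix identity underlying the computation of `S₋ fₙ` in Proposition 4.2.) -/
theorem alpha_pow_lower_unipotent_alpha_beta {E : Type*} [Field E] (σ : E ≃+* E)
    (hσ : ∀ a : E, σ (σ a) = a) (ϖ : E) (hϖ : ϖ ≠ 0) (hϖσ : σ ϖ = ϖ)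
    (x y : E) (hy : y ≠ 0) (hxy : x * σ x + y + σ y = 0) (n : ℤ) :
    (diagonal ![ϖ⁻¹, 1, ϖ] : Matrix (Fin 3) (Fin 3) E) ^ (-n) *
        !![1, 0, 0; x, 1, 0; y, -σ x, 1] * diagonal ![ϖ⁻¹, 1, ϖ] *
        !![0, 0, 1; 0, 1, 0; 1, 0, 0] =
      !![1, -ϖ ^ n * σ x * (σ y)⁻¹, ϖ ^ (2 * n) * y⁻¹;
          0, 1, -σ (-ϖ ^ n * σ x * (σ y)⁻¹); 0, 0, 1] *
        diagonal ![(σ y)⁻¹, -σ ((σ y)⁻¹) * ((σ y)⁻¹)⁻¹, (σ ((σ y)⁻¹))⁻¹] *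
        (diagonal ![ϖ⁻¹, 1, ϖ] : Matrix (Fin 3) (Fin 3) E) ^ (-(n + 1)) *
        !![1, 0, 0; ϖ * x * (σ y)⁻¹, 1, 0;
            ϖ ^ 2 * y⁻¹, -σ (ϖ * x * (σ y)⁻¹), 1] := by
  change alphaHom E ϖ ^ (-n) * lowerUnipotent σ x y * alphaHom E ϖ * antidiagOne E =
    upperUnipotent σ (-ϖ ^ n * σ x * (σ y)⁻¹) (ϖ ^ (2 * n) * y⁻¹) * torusElt σ (σ y)⁻¹ *
      alphaHom E ϖ ^ (-(n + 1)) * lowerUnipotent σ (ϖ * x * (σ y)⁻¹) (ϖ ^ 2 * y⁻¹)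
  have hϖn : σ (ϖ ^ n) = ϖ ^ n := by rw [map_zpow₀, hϖσ]
  rw [alphaHom_zpow hϖ, alphaHom_zpow hϖ, _root_.zpow_neg, mul_assoc _ (alphaHom E ϖ),
    alphaHom_mul_antidiagOne, ← mul_assoc, mul_assoc _ (lowerUnipotent σ x y),
    lowerUnipotent_mul_antidiagOne hσ hy hxy]
  calc _ = alphaHom E (ϖ ^ n)⁻¹ * upperUnipotent σ (-σ x * (σ y)⁻¹) y⁻¹ * torusElt σ (σ y)⁻¹ *
        (lowerUnipotent σ (x * (σ y)⁻¹) y⁻¹ * alphaHom E ϖ⁻¹) := by simp only [mul_assoc]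
    _ = upperUnipotent σ (ϖ ^ n * (-σ x * (σ y)⁻¹)) ((ϖ ^ n) ^ 2 * y⁻¹) * torusElt σ (σ y)⁻¹ *
        (alphaHom E (ϖ ^ n)⁻¹ * alphaHom E ϖ⁻¹) *
          lowerUnipotent σ (ϖ * (x * (σ y)⁻¹)) (ϖ ^ 2 * y⁻¹) := by
      rw [lowerUnipotent_mul_alphaHom_inv hϖ hϖσ,
        alphaHom_inv_mul_upperUnipotent (zpow_ne_zero n hϖ) hϖn]
      simp only [mul_assoc, (commute_alphaHom_torusElt σ _ _).left_comm]
    _ = _ := by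
      have hsq : (ϖ ^ n) ^ 2 = ϖ ^ (2 * n) := by rw [mul_comm, _root_.zpow_mul]; norm_cast
      rw [← map_mul, ← mul_inv, ← zpow_add_one₀ hϖ, ← _root_.zpow_neg, hsq]
      simp only [mul_assoc, neg_mul, mul_neg]
end

section
/- The set L_{q³} = { (x, t) ∈ F × F : x·x̄ + t + t̄ = 0 } has exactly q³ elements. -/
open Polynomial

-- bound on number of roots of a nonzero polynomial, as a set ncard
lemma aux_roots_ncard_le {F : Type*} [Field F] [DecidableEq F] (g : F[X]) (hg : g ≠ 0) :
    {u : F | g.eval u = 0}.ncard ≤ g.natDegree := by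
  have hset : {u : F | g.eval u = 0} = (g.roots.toFinset : Set F) := by
    ext u
    simp [Multiset.mem_toFinset, mem_roots, hg, IsRoot]
  rw [hset, Set.ncard_coe_finset]
  exact le_trans (Multiset.toFinset_card_le _) (card_roots' g)



/-- Let `q = p^f` (`p` an odd prime) and let `F` be a finite field with `q²` elements,
with conjugation `x̄ = x^q`. The set `L_{q³} = {(x,t) ∈ F × F : x·x̄ + t + t̄ = 0}`
has exactly `q³` elements. -/
theorem L_qcubed_card (p : ℕ) (hp : p.Prime) (hp2 : p ≠ 2) (f : ℕ) (hf : 0 < f)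
    (q : ℕ) (hq : q = p ^ f) (F : Type*) [Field F] [Fintype F]
    (hF : Fintype.card F = q ^ 2) :
    ({a : F × F | a.1 * a.1 ^ q + a.2 + a.2 ^ q = 0} : Set (F × F)).ncard = q ^ 3 := by
  classical
  -- char F = p
  haveI : CharP F (ringChar F) := ringChar.charP F
  have hrp : (ringChar F).Prime := CharP.char_is_prime F (ringChar F)
  obtain ⟨n, -, hn⟩ := FiniteField.card F (ringChar F)
  have hpr : p = ringChar F := by
    have hdvd : p ∣ ringChar F ^ (n : ℕ) := by
      rw [← hn, hF, hq, ← pow_mul]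
      exact dvd_pow_self p (by positivity)
    exact ((Nat.prime_dvd_prime_iff_eq hp hrp).mp (hp.dvd_of_dvd_pow hdvd))
  haveI hcharp : CharP F p := hpr ▸ ringChar.charP F
  have hq2 : 2 ≤ q := by
    rw [hq]
    calc 2 ≤ p := hp.two_le
    _ ≤ p ^ f := Nat.le_self_pow hf.ne' p
  have hq0 : 0 < q := by omega
  -- basic identities
  haveI := Fact.mk hp
  have frob : ∀ a b : F, (a + b) ^ q = a ^ q + b ^ q := by
    intro a b; rw [hq]; exact add_pow_char_pow ..
  have hpow2 : ∀ a : F, (a ^ q) ^ q = a := by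
    intro a
    rw [← pow_mul, ← sq, ← hF, FiniteField.pow_card]
  have two_ne : (2 : F) ≠ 0 := by
    intro h
    have h2 : (p : ℕ) ∣ 2 := (CharP.cast_eq_zero_iff F p 2).mp (by exact_mod_cast h)
    exact hp2 ((Nat.prime_dvd_prime_iff_eq hp Nat.prime_two).mp h2)
  have two_pow : (2 : F) ^ q = 2 := by
    have : ((1 : F) + 1) ^ q = 1 ^ q + 1 ^ q := frob 1 1
    simpa [one_pow, one_add_one_eq_two] using this
  -- the additive map φ u = u + u^q
  let φ : F →+ F := AddMonoidHom.mk' (fun u => u + u ^ q)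
    (by intro a b; simp only [frob]; ring)
  have hφ : ∀ u : F, φ u = u + u ^ q := fun _ => rfl
  -- kernel card = q
  have hker_le : Nat.card φ.ker ≤ q := by
    have hsub : ((φ.ker : Set F)) ⊆ {u : F | (X ^ q + X : F[X]).eval u = 0} := by
      intro u hu
      have : u + u ^ q = 0 := hu
      simp only [Set.mem_setOf_eq, eval_add, eval_pow, eval_X]
      linear_combination this
    have hgne : (X ^ q + X : F[X]) ≠ 0 := by
      have : (X ^ q + X : F[X]).Monic := monic_X_pow_add (by
        rw [degree_X]; exact_mod_cast hq2)
      exact this.ne_zero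
    have hdeg : (X ^ q + X : F[X]).natDegree = q := by
      compute_degree!
      rw [if_neg (by omega : ¬ 1 = q)]; simp
    calc Nat.card φ.ker = ((φ.ker : Set F)).ncard := by
          rw [← Nat.card_coe_set_eq]; rfl
      _ ≤ {u : F | (X ^ q + X : F[X]).eval u = 0}.ncard :=
          Set.ncard_le_ncard hsub (Set.toFinite _)
      _ ≤ (X ^ q + X : F[X]).natDegree := aux_roots_ncard_le _ hgne
      _ = q := hdeg
  have hrange_le : Nat.card φ.range ≤ q := by
    have hsub : ((φ.range : Set F)) ⊆ {u : F | (X ^ q - X : F[X]).eval u = 0} := by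
      rintro y ⟨t, rfl⟩
      have : (φ t) ^ q = φ t := by
        simp only [hφ, frob, hpow2]; ring
      simp only [Set.mem_setOf_eq, eval_sub, eval_pow, eval_X]
      rw [this]; ring
    have hgne : (X ^ q - X : F[X]) ≠ 0 := by
      have : (X ^ q - X : F[X]).Monic := by
        have := monic_X_pow_add (p := (-X : F[X])) (by
          rw [degree_neg, degree_X]; exact_mod_cast hq2)
        simpa [sub_eq_add_neg] using this
      exact this.ne_zero
    have hdeg : (X ^ q - X : F[X]).natDegree = q := by
      compute_degree!
      rw [if_neg (by omega : ¬ 1 = q)]; simp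
    calc Nat.card φ.range = ((φ.range : Set F)).ncard := by
          rw [← Nat.card_coe_set_eq]; rfl
      _ ≤ {u : F | (X ^ q - X : F[X]).eval u = 0}.ncard :=
          Set.ncard_le_ncard hsub (Set.toFinite _)
      _ ≤ (X ^ q - X : F[X]).natDegree := aux_roots_ncard_le _ hgne
      _ = q := hdeg
  have hcard_mul : Nat.card φ.range * Nat.card φ.ker = q ^ 2 := by
    have h1 := AddSubgroup.card_eq_card_quotient_mul_card_addSubgroup φ.ker
    have h2 : Nat.card (F ⧸ φ.ker) = Nat.card φ.range :=
      Nat.card_congr (QuotientAddGroup.quotientKerEquivRange φ).toEquiv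
    rw [h2] at h1
    rw [← h1, Nat.card_eq_fintype_card, hF]
  have hker_card : Nat.card φ.ker = q := by
    have h1 : q * q ≤ q * Nat.card φ.ker := by
      calc q * q = q ^ 2 := (sq q).symm
        _ = Nat.card φ.range * Nat.card φ.ker := hcard_mul.symm
        _ ≤ q * Nat.card φ.ker := Nat.mul_le_mul_right _ hrange_le
    have := Nat.le_of_mul_le_mul_left h1 hq0
    omega
  -- the bijection (x, t) ↦ (x, t + x * x^q / 2)
  set g : F × F → F × F := fun a => (a.1, a.2 + a.1 * a.1 ^ q * (2 : F)⁻¹) with hg_def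
  have hg_inj : Function.Injective g := by
    rintro ⟨x, t⟩ ⟨x', t'⟩ h
    simp only [hg_def, Prod.mk.injEq] at h
    obtain ⟨h1, h2⟩ := h
    subst h1
    have h3 : t = t' := add_right_cancel h2
    subst h3; rfl
  have himg : g '' {a : F × F | a.1 * a.1 ^ q + a.2 + a.2 ^ q = 0} =
      (Set.univ : Set F) ×ˢ {u : F | u + u ^ q = 0} := by
    ext ⟨x, u⟩
    simp only [Set.mem_image, Set.mem_prod, Set.mem_univ, true_and, Set.mem_setOf_eq,
      hg_def, Prod.mk.injEq, Prod.exists]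
    have hi : ((2 : F)⁻¹) ^ q = (2 : F)⁻¹ := by rw [inv_pow, two_pow]
    have hc : (x * x ^ q * (2 : F)⁻¹) ^ q = x * x ^ q * (2 : F)⁻¹ := by
      rw [mul_pow, mul_pow, hpow2, hi]
      ring
    constructor
    · rintro ⟨x', t, ht, rfl, rfl⟩
      rw [frob, hc]
      field_simp
      linear_combination 2 * ht
    · intro hu
      refine ⟨x, u - x * x ^ q * (2 : F)⁻¹, ?_, rfl, by ring⟩
      have : (u - x * x ^ q * (2 : F)⁻¹) ^ q = u ^ q - x * x ^ q * (2 : F)⁻¹ := by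
        rw [sub_eq_add_neg, frob, ← neg_one_mul, mul_pow, hc]
        have hm1 : (-1 : F) ^ q = -1 := by
          have : Odd q := by
            rw [hq]
            exact (hp.odd_of_ne_two hp2).pow
          exact this.neg_one_pow
        rw [hm1]; ring
      rw [this]
      field_simp
      linear_combination 2 * hu
  have hKset : {u : F | u + u ^ q = 0} = (φ.ker : Set F) := by
    ext u; simp [AddMonoidHom.mem_ker, hφ]
  calc ({a : F × F | a.1 * a.1 ^ q + a.2 + a.2 ^ q = 0} : Set (F × F)).ncard
      = (g '' {a : F × F | a.1 * a.1 ^ q + a.2 + a.2 ^ q = 0}).ncard :=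
        (Set.ncard_image_of_injective _ hg_inj).symm
    _ = ((Set.univ : Set F) ×ˢ {u : F | u + u ^ q = 0}).ncard := by rw [himg]
    _ = q ^ 3 := by
        rw [← Nat.card_coe_set_eq, Nat.card_congr (Equiv.Set.prod _ _),
          Nat.card_prod, hKset]
        have h3 : Nat.card ((φ.ker : Set F)) = q := by
          rw [← hker_card]; rfl
        rw [Nat.card_coe_set_eq, Set.ncard_univ, Nat.card_eq_fintype_card, hF, h3]
        ring
end

section
/- The map (x, t) ↦ n'(x, t) is an injective group homomorphism from L_{q³} (with the operation (x, t)·(x', t') = (x + x', t + t' − x'·x̄)) into GL₃(F), and its image is exactly the set of lower unitriangular matrices g ∈ GL₃(F) satisfying the unitary condition gᵀ · β · ḡ = β. -/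
open Matrix

/-- Let `q = p^f` (`p` an odd prime) and let `F` be a finite field with `q²` elements,
with conjugation `x̄ = x^q`. The map `(x,t) ↦ n'(x,t) = [[1,0,0],[x,1,0],[t,-x̄,1]]` is an
injective group homomorphism from `L_{q³} = {(x,t) : x·x̄ + t + t̄ = 0}` (with operation
`(x,t)·(x',t') = (x+x', t+t'-x'·x̄)`) into `GL₃(F)`, and its image is exactly the set of
lower unitriangular matrices `g` satisfying the unitary condition `gᵀ·β·ḡ = β`. -/
theorem L_qcubed_iso_unipotent_radical (p : ℕ) (hp : p.Prime) (hp2 : p ≠ 2)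
    (f : ℕ) (hf : 0 < f) (q : ℕ) (hq : q = p ^ f) (F : Type*) [Field F] [Fintype F]
    (hF : Fintype.card F = q ^ 2) :
    let mul : F × F → F × F → F × F := fun a b => (a.1 + b.1, a.2 + b.2 - b.1 * a.1 ^ q)
    let L : Set (F × F) := {a | a.1 * a.1 ^ q + a.2 + a.2 ^ q = 0}
    let n' : F × F → Matrix (Fin 3) (Fin 3) F := fun a => !![1, 0, 0; a.1, 1, 0; a.2, -a.1 ^ q, 1]
    let β : Matrix (Fin 3) (Fin 3) F := !![0, 0, 1; 0, 1, 0; 1, 0, 0]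
    (∀ a ∈ L, ∀ b ∈ L, n' (mul a b) = n' a * n' b) ∧
    (∀ a ∈ L, ∀ b ∈ L, n' a = n' b → a = b) ∧
    (∀ g : Matrix (Fin 3) (Fin 3) F, (∃ a ∈ L, g = n' a) ↔
      (g 0 0 = 1 ∧ g 1 1 = 1 ∧ g 2 2 = 1 ∧ g 0 1 = 0 ∧ g 0 2 = 0 ∧ g 1 2 = 0 ∧
        gᵀ * β * g.map (· ^ q) = β)) := by
  -- char F = p
  have hq0 : q ≠ 0 := by subst hq; exact (pow_pos hp.pos f).ne'
  haveI : CharP F (ringChar F) := ringChar.charP F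
  obtain ⟨n, hrp, hcard⟩ := FiniteField.card F (ringChar F)
  have hrp2 : ringChar F = p := by
    have hd : ringChar F ∣ p := by
      have : ringChar F ∣ q ^ 2 := by
        rw [← hF, hcard]; exact dvd_pow_self _ (by exact_mod_cast n.ne_zero)
      rw [hq, ← pow_mul] at this
      exact hrp.dvd_of_dvd_pow this
    exact (Nat.prime_dvd_prime_iff_eq hrp hp).mp (hd.trans dvd_rfl) ▸
      ((Nat.prime_dvd_prime_iff_eq hrp hp).mp hd)
  haveI hcharp : CharP F p := hrp2 ▸ ringChar.charP F
  have hadd : ∀ x y : F, (x + y) ^ q = x ^ q + y ^ q := by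
    intro x y; haveI := Fact.mk hp; subst hq; exact add_pow_char_pow x y p f
  have hneg : ∀ x : F, (-x) ^ q = -(x ^ q) := by
    intro x
    have h := hadd x (-x)
    rw [add_neg_cancel, zero_pow hq0] at h
    linear_combination -h
  have hqq : ∀ x : F, (x ^ q) ^ q = x := by
    intro x
    rw [← pow_mul, ← sq, ← hF, FiniteField.pow_card]
  intro mul L n' β
  refine ⟨?_, ?_, ?_⟩
  · intro a _ b _
    show n' (a.1 + b.1, a.2 + b.2 - b.1 * a.1 ^ q) = _
    ext i j
    fin_cases i <;> fin_cases j <;>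
      simp [n', Matrix.mul_apply, Fin.sum_univ_three, hadd] <;> ring
  · intro a _ b _ h
    have h1 := congrFun (congrFun h 1) 0
    have h2 := congrFun (congrFun h 2) 0
    simp [n'] at h1 h2
    exact Prod.ext h1 h2
  · intro g
    constructor
    · rintro ⟨a, ha, rfl⟩
      have hL : a.1 * a.1 ^ q + a.2 + a.2 ^ q = 0 := ha
      refine ⟨rfl, rfl, rfl, rfl, rfl, rfl, ?_⟩
      have hT : (n' a)ᵀ = !![1, a.1, a.2; 0, 1, -a.1 ^ q; 0, 0, 1] := by
        ext i j; fin_cases i <;> fin_cases j <;> rfl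
      have hM : (n' a).map (· ^ q) = !![1, 0, 0; a.1 ^ q, 1, 0; a.2 ^ q, -a.1, 1] := by
        ext i j
        fin_cases i <;> fin_cases j <;>
          simp [n', Matrix.map_apply, hneg, hqq, one_pow, zero_pow hq0]
      rw [hT, hM]
      ext i j
      fin_cases i <;> fin_cases j <;>
        simp [β, Matrix.mul_apply, Fin.sum_univ_three, Matrix.vecHead, Matrix.vecTail] <;>
        linear_combination hL
    · rintro ⟨h00, h11, h22, h01, h02, h12, hU⟩
      have e00 := congrFun (congrFun hU 0) 0
      have e10 := congrFun (congrFun hU 1) 0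
      simp [β, Matrix.mul_apply, Matrix.map_apply, Fin.sum_univ_three,
        Matrix.transpose_apply, h00, h11, h22, h01, h02, h12] at e00 e10
      refine ⟨(g 1 0, g 2 0), ?_, ?_⟩
      · show g 1 0 * g 1 0 ^ q + g 2 0 + (g 2 0) ^ q = 0
        linear_combination e00
      · ext i j
        fin_cases i <;> fin_cases j <;>
          simp [n', h00, h11, h22, h01, h02, h12]
        linear_combination e10
end

section
/- (Bruhat decomposition for the finite unitary group U(2,1)(k_E/k_F).) Let Γ = { g ∈ GL₃(F) : gᵀ · β · ḡ = β } and let 𝔹 be the subgroup of upper triangular elements of Γ. Then every g ∈ Γ either lies in 𝔹 or can be written as g = b₁ · β · b₂ with b₁, b₂ ∈ 𝔹; that is, Γ = 𝔹 ∪ 𝔹β𝔹. -/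
/-!
Write `σ` for the conjugation and `w` for the antidiagonal matrix. Comparing entries of
`gᵀ w σ(g) = w` shows that a unitary `g` with `g₂₀ = 0` is already upper triangular.
If `g₂₀ ≠ 0`, the isotropy of the last row of `g` yields `ε, γ` with `γ + σγ + ε σε = 0`
for which the unitary unipotent `u = [[1, -σε, γ], [0, 1, ε], [0, 0, 1]]` makes
`(g u)₂₂ = 0`. Then `b₁ = g u w` is unitary with `(b₁)₂₀ = 0`, so `b₁ ∈ 𝔹`, and
`g = b₁ w u⁻¹` with `u⁻¹ ∈ 𝔹`. Finally, `x ↦ x ^ q` is an involutive ring endomorphism since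
`q` is a power of the characteristic and `x ^ (q ^ 2) = x`.
-/

open Matrix

theorem FiniteField.exists_involutive_ringHom_eq_pow {F : Type*} [Field F] [Fintype F] {q : ℕ}
    (hF : Fintype.card F = q ^ 2) : ∃ σ : F →+* F, Function.Involutive σ ∧ ⇑σ = (· ^ q) := by
  obtain ⟨r, hr⟩ := CharP.exists F
  obtain ⟨n, hrp, hcard⟩ := FiniteField.card F r
  have : Fact r.Prime := ⟨hrp⟩
  have hq : q ∣ r ^ (n : ℕ) := by
    rw [← hcard, hF]
    exact dvd_pow_self q two_ne_zero
  obtain ⟨m, -, rfl⟩ := (Nat.dvd_prime_pow hrp).mp hq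
  refine ⟨iterateFrobenius F r m, fun x => ?_, funext (iterateFrobenius_def r m)⟩
  rw [iterateFrobenius_def, iterateFrobenius_def, ← pow_mul, ← sq, ← hF, FiniteField.pow_card]

namespace Unitary21

variable {F : Type*} [Field F]

def antidiag : Matrix (Fin 3) (Fin 3) F := !![0, 0, 1; 0, 1, 0; 1, 0, 0]

def IsUnitary (σ : F →+* F) (g : Matrix (Fin 3) (Fin 3) F) : Prop :=
  gᵀ * antidiag * g.map σ = antidiag

def IsUpperTriangular (g : Matrix (Fin 3) (Fin 3) F) : Prop :=
  g 1 0 = 0 ∧ g 2 0 = 0 ∧ g 2 1 = 0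

def unipotent (σ : F →+* F) (ε γ : F) : Matrix (Fin 3) (Fin 3) F :=
  !![1, -σ ε, γ; 0, 1, ε; 0, 0, 1]

theorem antidiag_mul_self : (antidiag : Matrix (Fin 3) (Fin 3) F) * antidiag = 1 := by
  ext i j
  fin_cases i <;> fin_cases j <;> simp [antidiag, mul_apply, Fin.sum_univ_three]

theorem transpose_antidiag : (antidiag : Matrix (Fin 3) (Fin 3) F)ᵀ = antidiag := by
  ext i j
  fin_cases i <;> fin_cases j <;> rfl

theorem map_antidiag (σ : F →+* F) : (antidiag : Matrix (Fin 3) (Fin 3) F).map σ = antidiag := by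
  ext i j
  fin_cases i <;> fin_cases j <;> simp [antidiag]

theorem transpose_mul_antidiag_mul_apply (M N : Matrix (Fin 3) (Fin 3) F) (i j : Fin 3) :
    (Mᵀ * antidiag * N : Matrix (Fin 3) (Fin 3) F) i j =
      M 2 i * N 0 j + M 1 i * N 1 j + M 0 i * N 2 j := by
  simp [antidiag, mul_apply, Fin.sum_univ_three]

variable {σ : F →+* F}

theorem isUnitary_antidiag : IsUnitary σ antidiag := by
  rw [IsUnitary, transpose_antidiag, map_antidiag, antidiag_mul_self, one_mul]

theorem IsUnitary.mul {g h : Matrix (Fin 3) (Fin 3) F} (hg : IsUnitary σ g)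
    (hh : IsUnitary σ h) : IsUnitary σ (g * h) := by
  rw [IsUnitary, transpose_mul, Matrix.map_mul]
  calc hᵀ * gᵀ * antidiag * (g.map σ * h.map σ)
      = hᵀ * (gᵀ * antidiag * g.map σ) * h.map σ := by simp only [Matrix.mul_assoc]
    _ = antidiag := by rw [hg, hh]

theorem IsUnitary.apply {g : Matrix (Fin 3) (Fin 3) F} (hg : IsUnitary σ g) (i j : Fin 3) :
    g 2 i * σ (g 0 j) + g 1 i * σ (g 1 j) + g 0 i * σ (g 2 j) = antidiag i j := by
  rw [IsUnitary] at hg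
  simpa [transpose_mul_antidiag_mul_apply] using congrFun₂ hg i j

/-- `w gᵀ w` is a left, hence a right, inverse of `σ(g)`, so the rows of `g` satisfy the same
relations as its columns. -/
theorem IsUnitary.transpose_map (hσ : Function.Involutive σ) {g : Matrix (Fin 3) (Fin 3) F}
    (hg : IsUnitary σ g) : IsUnitary σ (g.map σ)ᵀ := by
  have hinv : antidiag * gᵀ * antidiag * g.map σ = 1 := by
    calc antidiag * gᵀ * antidiag * g.map σ = antidiag * (gᵀ * antidiag * g.map σ) := by
          simp only [Matrix.mul_assoc]
      _ = 1 := by rw [hg, antidiag_mul_self]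
  have hright : g.map σ * (antidiag * gᵀ * antidiag) = 1 := mul_eq_one_comm.mp hinv
  have hmap : (gᵀ.map σ).map σ = gᵀ := by ext i j; exact hσ _
  rw [IsUnitary, transpose_transpose, ← Matrix.transpose_map, hmap]
  calc g.map σ * antidiag * gᵀ = g.map σ * (antidiag * gᵀ * antidiag) * antidiag := by
        simp only [Matrix.mul_assoc, antidiag_mul_self, Matrix.mul_one]
    _ = antidiag := by rw [hright, Matrix.one_mul]

variable {g : Matrix (Fin 3) (Fin 3) F}

theorem IsUnitary.isUpperTriangular (hg : IsUnitary σ g) (h20 : g 2 0 = 0) :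
    IsUpperTriangular g := by
  have h00 := hg.apply 0 0
  simp only [h20, map_zero, zero_mul, zero_add, mul_zero, add_zero] at h00
  have h10 : g 1 0 = 0 := by simpa [antidiag] using h00
  have h02 := hg.apply 0 2
  have h01 := hg.apply 0 1
  simp only [h20, h10, zero_mul, zero_add] at h02 h01
  refine ⟨h10, h20, ?_⟩
  simpa [antidiag, left_ne_zero_of_mul_eq_one h02] using h01

variable (σ) in
theorem unipotent_mul_unipotent {ε γ : F} (hk : γ + σ γ + ε * σ ε = 0) :
    unipotent σ ε γ * unipotent σ (-ε) (σ γ) = 1 := by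
  ext i j
  fin_cases i <;> fin_cases j <;> simp [unipotent, mul_apply, Fin.sum_univ_three]
  linear_combination hk

theorem isUnitary_unipotent (hσ : Function.Involutive σ) {ε γ : F}
    (hk : γ + σ γ + ε * σ ε = 0) : IsUnitary σ (unipotent σ ε γ) := by
  ext i j
  fin_cases i <;> fin_cases j <;>
    simp [unipotent, antidiag, mul_apply, Fin.sum_univ_three, hσ _]
  linear_combination hk

theorem IsUnitary.exists_unipotent (hσ : Function.Involutive σ) (hg : IsUnitary σ g)
    (h20 : g 2 0 ≠ 0) : ∃ ε γ : F, γ + σ γ + ε * σ ε = 0 ∧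
      g 2 0 * γ + g 2 1 * ε + g 2 2 = 0 := by
  have hrow := (hg.transpose_map hσ).apply 2 2
  simp only [transpose_apply, map_apply, hσ _, antidiag, of_apply, cons_val] at hrow
  -- `ε = σ(g₂₁ / g₂₀)`, and `γ` is then forced by the second equation.
  have hσ20 : σ (g 2 0) ≠ 0 := (map_ne_zero σ).mpr h20
  refine ⟨σ (g 2 1) / σ (g 2 0), -(g 2 1 * (σ (g 2 1) / σ (g 2 0)) + g 2 2) / g 2 0, ?_, ?_⟩
  · simp only [map_div₀, map_neg, map_add, map_mul, hσ _]
    field_simp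
    linear_combination -hrow
  · field_simp
    ring

theorem IsUnitary.isUpperTriangular_or_eq_mul_antidiag_mul (hσ : Function.Involutive σ)
    (hg : IsUnitary σ g) :
    IsUpperTriangular g ∨ ∃ b₁ b₂ : Matrix (Fin 3) (Fin 3) F,
      (IsUnitary σ b₁ ∧ IsUpperTriangular b₁) ∧ (IsUnitary σ b₂ ∧ IsUpperTriangular b₂) ∧
        g = b₁ * antidiag * b₂ := by
  by_cases h20 : g 2 0 = 0
  · exact .inl (hg.isUpperTriangular h20)
  obtain ⟨ε, γ, hk, hγ⟩ := hg.exists_unipotent hσ h20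
  have hk' : σ γ + σ (σ γ) + -ε * σ (-ε) = 0 := by
    rw [hσ, map_neg]
    linear_combination hk
  have hb₁ : IsUnitary σ (g * unipotent σ ε γ * antidiag) :=
    (hg.mul (isUnitary_unipotent hσ hk)).mul isUnitary_antidiag
  refine .inr ⟨_, _, ⟨hb₁, hb₁.isUpperTriangular ?_⟩,
    ⟨isUnitary_unipotent hσ hk', rfl, rfl, rfl⟩, ?_⟩
  · simp [unipotent, antidiag, mul_apply, Fin.sum_univ_three]
    linear_combination hγ
  · calc g = g * (unipotent σ ε γ * unipotent σ (-ε) (σ γ)) := by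
          rw [unipotent_mul_unipotent σ hk, Matrix.mul_one]
      _ = g * unipotent σ ε γ * antidiag * antidiag * unipotent σ (-ε) (σ γ) := by
          simp only [Matrix.mul_assoc]
          rw [← Matrix.mul_assoc antidiag, antidiag_mul_self, Matrix.one_mul]

end Unitary21

theorem finite_unitary_bruhat_general (q : ℕ) (F : Type*) [Field F] [Fintype F]
    (hF : Fintype.card F = q ^ 2) :
    let β : Matrix (Fin 3) (Fin 3) F := !![0, 0, 1; 0, 1, 0; 1, 0, 0]
    let Γ : Set (Matrix (Fin 3) (Fin 3) F) := {g | gᵀ * β * g.map (· ^ q) = β}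
    let 𝔹 : Set (Matrix (Fin 3) (Fin 3) F) := {g | g ∈ Γ ∧ g 1 0 = 0 ∧ g 2 0 = 0 ∧ g 2 1 = 0}
    ∀ g ∈ Γ, g ∈ 𝔹 ∨ ∃ b₁ ∈ 𝔹, ∃ b₂ ∈ 𝔹, g = b₁ * β * b₂ := by
  obtain ⟨σ, hσ, hσq⟩ := FiniteField.exists_involutive_ringHom_eq_pow hF
  intro β Γ 𝔹 g hg
  simp only [𝔹, Γ, Set.mem_ofPred_eq, ← hσq] at hg ⊢
  rcases Unitary21.IsUnitary.isUpperTriangular_or_eq_mul_antidiag_mul hσ hg with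
    hB | ⟨b₁, b₂, hb₁, hb₂, rfl⟩
  · exact .inl ⟨hg, hB⟩
  · exact .inr ⟨b₁, hb₁, b₂, hb₂, rfl⟩

/-- Bruhat decomposition for the finite unitary group `U(2,1)(k_E/k_F)`. Let `q = p^f`
(`p` an odd prime), let `F` be a finite field with `q²` elements with conjugation
`x̄ = x^q`, let `Γ = {g ∈ GL₃(F) : gᵀ·β·ḡ = β}` and let `𝔹` be the subgroup of upper
triangular elements of `Γ`. Then every `g ∈ Γ` either lies in `𝔹` or can be written as
`g = b₁·β·b₂` with `b₁, b₂ ∈ 𝔹`; that is, `Γ = 𝔹 ∪ 𝔹β𝔹`. -/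
theorem finite_unitary_bruhat (p : ℕ) (hp : p.Prime) (hp2 : p ≠ 2) (f : ℕ) (hf : 0 < f)
    (q : ℕ) (hq : q = p ^ f) (F : Type*) [Field F] [Fintype F]
    (hF : Fintype.card F = q ^ 2) :
    let β : Matrix (Fin 3) (Fin 3) F := !![0, 0, 1; 0, 1, 0; 1, 0, 0]
    let Γ : Set (Matrix (Fin 3) (Fin 3) F) := {g | gᵀ * β * g.map (· ^ q) = β}
    let 𝔹 : Set (Matrix (Fin 3) (Fin 3) F) := {g | g ∈ Γ ∧ g 1 0 = 0 ∧ g 2 0 = 0 ∧ g 2 1 = 0}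
    ∀ g ∈ Γ, g ∈ 𝔹 ∨ ∃ b₁ ∈ 𝔹, ∃ b₂ ∈ 𝔹, g = b₁ * β * b₂ :=
  finite_unitary_bruhat_general q F hF
end
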